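/- For all x > 0 and ν > 3/2, K_{ν−1}(x)/K_ν(x) < x/(ν − 1/2 + √((ν − 3/2)² + x²)). Equality holds when ν = 3/2, and the inequality is reversed for ν < 3/2. -/

import Mathlib

/-! With `q(r) = x r² + (2ν - 1) r - x`, the function `F_ν(x) = K_ν(x)² q(K_{ν-1}(x) / K_ν(x))`
(`besselKQuadratic`) has derivative `(1 - 2ν) K_{ν-1} K_ν / x`, by `2 K_ν' = -(K_{ν+1} + K_{ν-1})`
and the recurrence `x (K_{ν+1} - K_{ν-1}) = 2ν K_ν`. Since `F_ν` vanishes at infinity, its sign is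
that of `ν - 1/2`, and as the positive root of `q` is `x / (ν - 1/2 + √((ν - 1/2)² + x²))`, this
compares `K_{ν-1} / K_ν` with that root. Used at order `ν - 1` inside
`K_{ν-1} / K_ν = (2(ν - 1)/x + K_{ν-2} / K_{ν-1})⁻¹`, which decreases in `K_{ν-2} / K_{ν-1}`,
the comparison is reversed and becomes the theorem. -/

open Real MeasureTheory

/-- Modified Bessel function of the second kind. -/
noncomputable def besselK (ν x : ℝ) : ℝ :=
  ∫ t in Set.Ioi (0:ℝ), Real.exp (-x * Real.cosh t) * Real.cosh (ν * t)

open Set Filter Topology Asymptotics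

lemma one_add_sq_div_two_le_cosh (t : ℝ) : 1 + t ^ 2 / 2 ≤ cosh t := by
  have h := sum_le_hasSum (Finset.range 2) (fun n _ => ?_) (hasSum_cosh t)
  · simpa [Finset.sum_range_succ] using h
  · rw [pow_mul]; positivity

lemma cosh_le_exp_abs (t : ℝ) : cosh t ≤ exp |t| := by
  rw [← cosh_abs, cosh_eq]
  linarith [exp_le_exp.2 (neg_le_self (abs_nonneg t))]

lemma abs_sinh_le_cosh (t : ℝ) : |sinh t| ≤ cosh t := by
  rw [abs_sinh, ← cosh_abs]
  exact (sinh_lt_cosh _).le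

lemma cosh_mul_cosh_mul (ν t : ℝ) :
    cosh t * cosh (ν * t) = (cosh ((ν + 1) * t) + cosh ((ν - 1) * t)) / 2 := by
  rw [add_mul, sub_mul, one_mul, cosh_add, cosh_sub]
  ring

lemma sinh_mul_sinh_mul (ν t : ℝ) :
    sinh t * sinh (ν * t) = (cosh ((ν + 1) * t) - cosh ((ν - 1) * t)) / 2 := by
  rw [add_mul, sub_mul, one_mul, cosh_add, cosh_sub]
  ring

lemma neg_mul_cosh_add_mul_abs_le {x : ℝ} (hx : 0 < x) (c t : ℝ) :
    -x * cosh t + c * |t| ≤ c ^ 2 / x - x - x / 4 * t ^ 2 := by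
  have hAM : c * |t| - x / 4 * t ^ 2 ≤ c ^ 2 / x := by
    rw [le_div_iff₀ hx, ← sq_abs t]
    nlinarith [sq_nonneg (x * |t| / 2 - c)]
  nlinarith [one_add_sq_div_two_le_cosh t]

lemma integrable_exp_neg_mul_cosh_mul_cosh {x : ℝ} (hx : 0 < x) (ν : ℝ) :
    Integrable fun t => exp (-x * cosh t) * cosh (ν * t) := by
  refine ((integrable_exp_neg_mul_sq (by positivity : 0 < x / 4)).const_mul
    (exp (|ν| ^ 2 / x - x))).mono' (by fun_prop) (ae_of_all _ fun t => ?_)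
  rw [norm_of_nonneg (by positivity)]
  calc exp (-x * cosh t) * cosh (ν * t) ≤ exp (-x * cosh t) * exp (|ν| * |t|) := by
        gcongr
        simpa [abs_mul] using cosh_le_exp_abs (ν * t)
    _ ≤ exp (|ν| ^ 2 / x - x - x / 4 * t ^ 2) := by
        rw [← exp_add]
        exact exp_le_exp.2 (neg_mul_cosh_add_mul_abs_le hx _ _)
    _ = exp (|ν| ^ 2 / x - x) * exp (-(x / 4) * t ^ 2) := by
        rw [← exp_add]
        ring_nf

lemma integrable_cosh_mul_exp_neg_mul_cosh_mul_cosh {x : ℝ} (hx : 0 < x) (ν : ℝ) :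
    Integrable fun t => cosh t * (exp (-x * cosh t) * cosh (ν * t)) := by
  simp_rw [mul_left_comm (cosh _), cosh_mul_cosh_mul, mul_div_assoc', mul_add]
  exact ((integrable_exp_neg_mul_cosh_mul_cosh hx _).add
    (integrable_exp_neg_mul_cosh_mul_cosh hx _)).div_const 2

lemma integral_cosh_mul_exp_neg_mul_cosh_mul_cosh {x : ℝ} (hx : 0 < x) (ν : ℝ) :
    ∫ t in Ioi 0, cosh t * (exp (-x * cosh t) * cosh (ν * t)) =
      (besselK (ν + 1) x + besselK (ν - 1) x) / 2 := by
  simp_rw [mul_left_comm (cosh _), cosh_mul_cosh_mul, mul_div_assoc', mul_add]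
  rw [integral_div, integral_add (integrable_exp_neg_mul_cosh_mul_cosh hx _).integrableOn
    (integrable_exp_neg_mul_cosh_mul_cosh hx _).integrableOn]
  rfl

lemma besselK_pos {x : ℝ} (hx : 0 < x) (ν : ℝ) : 0 < besselK ν x := by
  have hsupp : Function.support (fun t => exp (-x * cosh t) * cosh (ν * t)) = univ :=
    eq_univ_of_forall fun t => (by positivity : 0 < exp (-x * cosh t) * cosh (ν * t)).ne'
  rw [besselK, setIntegral_pos_iff_support_of_nonneg_ae (ae_of_all _ fun t => by positivity)
    (integrable_exp_neg_mul_cosh_mul_cosh hx ν).integrableOn, hsupp, univ_inter]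
  simp

lemma besselK_neg (ν x : ℝ) : besselK (-ν) x = besselK ν x := by
  simp only [besselK, neg_mul, cosh_neg]

lemma besselK_add_one_sub_besselK_sub_one {x : ℝ} (hx : 0 < x) (ν : ℝ) :
    x * (besselK (ν + 1) x - besselK (ν - 1) x) = 2 * ν * besselK ν x := by
  set E : ℝ → ℝ → ℝ := fun μ t => exp (-x * cosh t) * cosh (μ * t) with hE
  have hint (μ : ℝ) : IntegrableOn (E μ) (Ioi 0) :=
    (integrable_exp_neg_mul_cosh_mul_cosh hx μ).integrableOn
  have hderiv (t : ℝ) : HasDerivAt (fun t => exp (-x * cosh t) * sinh (ν * t))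
      (ν * E ν t - x / 2 * (E (ν + 1) t - E (ν - 1) t)) t := by
    refine (((hasDerivAt_cosh t).const_mul (-x)).exp.fun_mul
      ((hasDerivAt_id' t).const_mul ν).sinh).congr_deriv ?_
    simp only [hE]
    linear_combination (-x * exp (-x * cosh t)) * sinh_mul_sinh_mul ν t
  have hsub : IntegrableOn (fun t => E (ν + 1) t - E (ν - 1) t) (Ioi 0) := (hint _).sub (hint _)
  have hint' : IntegrableOn (fun t => ν * E ν t - x / 2 * (E (ν + 1) t - E (ν - 1) t)) (Ioi 0) :=
    ((hint ν).const_mul ν).sub (hsub.const_mul _)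
  have hsinh : IntegrableOn (fun t => exp (-x * cosh t) * sinh (ν * t)) (Ioi 0) := by
    refine (hint ν).mono' (by fun_prop) (ae_of_all _ fun t => ?_)
    rw [norm_mul, norm_of_nonneg (exp_pos _).le, norm_eq_abs]
    exact mul_le_mul_of_nonneg_left (abs_sinh_le_cosh _) (exp_pos _).le
  have h := integral_Ioi_of_hasDerivAt_of_tendsto' (fun t _ => hderiv t) hint'
    (tendsto_zero_of_hasDerivAt_of_integrableOn_Ioi (fun t _ => hderiv t) hint' hsinh)
  rw [integral_sub ((hint ν).const_mul ν) (hsub.const_mul _),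
    integral_const_mul, integral_const_mul, integral_sub (hint _) (hint _)] at h
  simp only [mul_zero, sinh_zero, sub_zero] at h
  change ν * besselK ν x - x / 2 * (besselK (ν + 1) x - besselK (ν - 1) x) = 0 at h
  linarith

lemma hasDerivAt_besselK {x : ℝ} (hx : 0 < x) (ν : ℝ) :
    HasDerivAt (besselK ν) (-((besselK (ν + 1) x + besselK (ν - 1) x) / 2)) x := by
  have key := hasDerivAt_integral_of_dominated_loc_of_deriv_le (μ := volume.restrict (Ioi 0))
    (F := fun y t => exp (-y * cosh t) * cosh (ν * t))
    (F' := fun y t => -(cosh t * (exp (-y * cosh t) * cosh (ν * t))))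
    (bound := fun t => cosh t * (exp (-(x / 2) * cosh t) * cosh (ν * t)))
    (Metric.ball_mem_nhds x (half_pos hx)) (Eventually.of_forall fun y => by fun_prop)
    (integrable_exp_neg_mul_cosh_mul_cosh hx ν).integrableOn (by fun_prop)
    (ae_of_all _ fun t y hy => ?_)
    (integrable_cosh_mul_exp_neg_mul_cosh_mul_cosh (half_pos hx) ν).integrableOn
    (ae_of_all _ fun t y _ => ?_)
  · rw [integral_neg, integral_cosh_mul_exp_neg_mul_cosh_mul_cosh hx] at key
    exact key.2
  · have hy : x / 2 ≤ y := by
      linarith [(abs_lt.1 (mem_ball_iff_norm.1 hy)).1]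
    rw [norm_neg, norm_of_nonneg (by positivity)]
    gcongr
  · refine (((hasDerivAt_neg' y).mul_const (cosh t)).exp.mul_const (cosh (ν * t))).congr_deriv ?_
    ring

lemma besselK_le_exp_one_sub_mul {x : ℝ} (hx : 1 ≤ x) (ν : ℝ) :
    besselK ν x ≤ exp (1 - x) * besselK ν 1 := by
  rw [besselK, besselK, ← integral_const_mul]
  refine setIntegral_mono_on (integrable_exp_neg_mul_cosh_mul_cosh (by linarith) ν).integrableOn
    ((integrable_exp_neg_mul_cosh_mul_cosh one_pos ν).integrableOn.const_mul _)
    measurableSet_Ioi fun t _ => ?_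
  rw [← mul_assoc, ← exp_add]
  gcongr
  nlinarith [one_le_cosh t]

lemma besselK_isBigO_exp_neg (ν : ℝ) : besselK ν =O[atTop] fun x => exp (-x) := by
  refine IsBigO.of_bound (exp 1 * besselK ν 1) ?_
  filter_upwards [eventually_ge_atTop 1] with x hx
  rw [norm_of_nonneg (besselK_pos (by linarith) ν).le, norm_of_nonneg (exp_pos _).le]
  calc besselK ν x ≤ exp (1 - x) * besselK ν 1 := besselK_le_exp_one_sub_mul hx ν
    _ = exp 1 * besselK ν 1 * exp (-x) := by rw [sub_eq_add_neg, exp_add]; ring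

noncomputable def besselKQuadratic (ν x : ℝ) : ℝ :=
  x * besselK (ν - 1) x ^ 2 + (2 * ν - 1) * (besselK (ν - 1) x * besselK ν x) -
    x * besselK ν x ^ 2

lemma tendsto_besselKQuadratic_atTop (ν : ℝ) :
    Tendsto (besselKQuadratic ν) atTop (𝓝 0) := by
  have hexp : Tendsto (fun x : ℝ => exp (-x) * exp (-x)) atTop (𝓝 0) := by
    simpa using tendsto_exp_neg_atTop_nhds_zero.mul tendsto_exp_neg_atTop_nhds_zero
  have hxexp : Tendsto (fun x : ℝ => x * exp (-x) * exp (-x)) atTop (𝓝 0) := by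
    simpa using (tendsto_pow_mul_exp_neg_atTop_nhds_zero 1).mul tendsto_exp_neg_atTop_nhds_zero
  have hK (a b : ℝ) : Tendsto (fun x => besselK a x * besselK b x) atTop (𝓝 0) :=
    ((besselK_isBigO_exp_neg a).mul (besselK_isBigO_exp_neg b)).trans_tendsto hexp
  have hxK (a b : ℝ) : Tendsto (fun x => x * besselK a x * besselK b x) atTop (𝓝 0) :=
    (((isBigO_refl id atTop).mul (besselK_isBigO_exp_neg a)).mul
      (besselK_isBigO_exp_neg b)).trans_tendsto hxexp
  have h := ((hxK (ν - 1) (ν - 1)).add ((hK (ν - 1) ν).const_mul (2 * ν - 1))).sub (hxK ν ν)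
  simp only [add_zero, mul_zero, sub_zero] at h
  convert h using 2 with x
  simp only [besselKQuadratic]
  ring

lemma hasDerivAt_besselKQuadratic {x : ℝ} (hx : 0 < x) (ν : ℝ) :
    HasDerivAt (besselKQuadratic ν)
      ((1 - 2 * ν) * (besselK (ν - 1) x * besselK ν x / x)) x := by
  have hA := hasDerivAt_besselK hx (ν - 1)
  have hB := hasDerivAt_besselK hx ν
  have hrecA := besselK_add_one_sub_besselK_sub_one hx (ν - 1)
  have hrecB := besselK_add_one_sub_besselK_sub_one hx ν
  rw [sub_add_cancel] at hA hrecA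
  refine ((((hasDerivAt_id' x).fun_mul (hA.fun_pow 2)).add ((hA.fun_mul hB).const_mul _)).sub
    ((hasDerivAt_id' x).fun_mul (hB.fun_pow 2))).congr_deriv ?_
  rw [mul_div_assoc', eq_div_iff hx.ne']
  linear_combination (x * besselK (ν - 1) x + (2 * ν - 1) / 2 * besselK ν x) * hrecA
    + (x * besselK ν x - (2 * ν - 1) / 2 * besselK (ν - 1) x) * hrecB

lemma pos_of_hasDerivAt_neg_of_tendsto_zero {f f' : ℝ → ℝ} {a : ℝ}
    (hf : ∀ y ∈ Ici a, HasDerivAt f (f' y) y) (hf' : ∀ y ∈ Ici a, f' y < 0)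
    (hlim : Tendsto f atTop (𝓝 0)) : 0 < f a := by
  have hanti : StrictAntiOn f (Ici a) := by
    refine strictAntiOn_of_hasDerivWithinAt_neg (convex_Ici a)
      (fun y hy => (hf y hy).continuousAt.continuousWithinAt) (fun y hy => ?_)
      (fun y hy => hf' y (interior_subset hy))
    exact (hf y (interior_subset hy)).hasDerivWithinAt
  have hnext : 0 ≤ f (a + 1) := by
    refine le_of_tendsto hlim ?_
    filter_upwards [eventually_ge_atTop (a + 1)] with y hy
    exact hanti.antitoneOn (by simp) (by simp; linarith) hy
  linarith [hanti self_mem_Ici (show a ≤ a + 1 by linarith) (lt_add_one a)]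

lemma sign_besselKQuadratic {x : ℝ} (hx : 0 < x) (ν : ℝ) :
    SignType.sign (besselKQuadratic ν x) = SignType.sign (ν - 1 / 2) := by
  have hderiv (y : ℝ) (hy : y ∈ Ici x) :
      HasDerivAt (besselKQuadratic ν) ((1 - 2 * ν) * (besselK (ν - 1) y * besselK ν y / y)) y :=
    hasDerivAt_besselKQuadratic (hx.trans_le hy) ν
  have hpos (y : ℝ) (hy : y ∈ Ici x) : 0 < besselK (ν - 1) y * besselK ν y / y := by
    have hy : 0 < y := hx.trans_le hy
    have := besselK_pos hy (ν - 1)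
    have := besselK_pos hy ν
    positivity
  rcases lt_trichotomy ν (1 / 2) with hν | rfl | hν
  · have h := pos_of_hasDerivAt_neg_of_tendsto_zero (fun y hy => (hderiv y hy).neg)
      (fun y hy => neg_lt_zero.2 (mul_pos (by linarith) (hpos y hy)))
      (by rw [← neg_zero]; exact (tendsto_besselKQuadratic_atTop ν).neg)
    rw [sign_neg (by simpa using h), sign_neg (by linarith)]
  · rw [besselKQuadratic, show (1 / 2 : ℝ) - 1 = -(1 / 2) by norm_num, besselK_neg]
    simp
  · have h := pos_of_hasDerivAt_neg_of_tendsto_zero hderiv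
      (fun y hy => mul_neg_of_neg_of_pos (by linarith) (hpos y hy))
      (tendsto_besselKQuadratic_atTop ν)
    rw [sign_pos h, sign_pos (by linarith)]

lemma add_sqrt_sq_add_sq_pos (a : ℝ) {x : ℝ} (hx : x ≠ 0) : 0 < a + √(a ^ 2 + x ^ 2) := by
  have h : |a| < √(a ^ 2 + x ^ 2) := by
    rw [lt_sqrt (abs_nonneg a), sq_abs]
    have : 0 < x ^ 2 := by positivity
    linarith
  linarith [neg_abs_le a]

lemma sign_quadratic_eq_sign_sub_root {x r : ℝ} (a : ℝ) (hx : 0 < x) (hr : 0 < r) :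
    SignType.sign (x * r ^ 2 + 2 * a * r - x) =
      SignType.sign (r - x / (a + √(a ^ 2 + x ^ 2))) := by
  set R := √(a ^ 2 + x ^ 2)
  have hD : 0 < a + R := add_sqrt_sq_add_sq_pos a hx.ne'
  have hR : R ^ 2 = a ^ 2 + x ^ 2 := sq_sqrt (by positivity)
  have hfactor : x * r ^ 2 + 2 * a * r - x = (x * r + (a + R)) * (r - x / (a + R)) := by
    field_simp
    linear_combination (-r) * hR
  rw [hfactor, sign_mul, sign_pos (by positivity), one_mul]

lemma sign_besselK_div_sub {x : ℝ} (hx : 0 < x) (ν : ℝ) :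
    SignType.sign (besselK (ν - 1) x / besselK ν x -
      x / (ν - 1 / 2 + √((ν - 1 / 2) ^ 2 + x ^ 2))) = SignType.sign (ν - 1 / 2) := by
  have hA := besselK_pos hx (ν - 1)
  have hB := besselK_pos hx ν
  have hquad : besselKQuadratic ν x = besselK ν x ^ 2 *
      (x * (besselK (ν - 1) x / besselK ν x) ^ 2 +
        2 * (ν - 1 / 2) * (besselK (ν - 1) x / besselK ν x) - x) := by
    rw [besselKQuadratic]
    field_simp
  rw [← sign_besselKQuadratic hx ν, hquad, sign_mul, sign_pos (pow_pos hB 2), one_mul,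
    sign_quadratic_eq_sign_sub_root _ hx (div_pos hA hB)]

lemma sign_div_sub_eq_sign_sub_div {x ν A B P : ℝ} (hx : 0 < x) (hA : 0 < A) (hB : 0 < B)
    (hrec : x * (B - P) = 2 * (ν - 1) * A) :
    SignType.sign (A / B - x / (ν - 1 / 2 + √((ν - 3 / 2) ^ 2 + x ^ 2))) =
      SignType.sign (x / (ν - 3 / 2 + √((ν - 3 / 2) ^ 2 + x ^ 2)) - P / A) := by
  set R := √((ν - 3 / 2) ^ 2 + x ^ 2)
  have hD : 0 < ν - 3 / 2 + R := add_sqrt_sq_add_sq_pos _ hx.ne'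
  have hD' : 0 < ν - 1 / 2 + R := by linarith
  have hR : R ^ 2 = (ν - 3 / 2) ^ 2 + x ^ 2 := sq_sqrt (by positivity)
  have hmoebius : A / B - x / (ν - 1 / 2 + R) =
      x * A / (B * (ν - 1 / 2 + R)) * (x / (ν - 3 / 2 + R) - P / A) := by
    rw [div_sub_div _ _ hB.ne' hD'.ne', div_sub_div _ _ hD.ne' hA.ne', div_mul_div_comm,
      div_eq_div_iff (by positivity) (by positivity)]
    linear_combination (B * (ν - 1 / 2 + R) * A) * (A * hR - (ν - 3 / 2 + R) * hrec)
  rw [hmoebius, sign_mul, sign_pos (by positivity), one_mul]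

theorem stmt_4 (ν x : ℝ) (hx : 0 < x) :
    (3 / 2 < ν → besselK (ν - 1) x / besselK ν x <
      x / (ν - 1 / 2 + Real.sqrt ((ν - 3 / 2) ^ 2 + x ^ 2))) ∧
    (ν = 3 / 2 → besselK (ν - 1) x / besselK ν x =
      x / (ν - 1 / 2 + Real.sqrt ((ν - 3 / 2) ^ 2 + x ^ 2))) ∧
    (ν < 3 / 2 → besselK (ν - 1) x / besselK ν x >
      x / (ν - 1 / 2 + Real.sqrt ((ν - 3 / 2) ^ 2 + x ^ 2))) := by
  have hrec := besselK_add_one_sub_besselK_sub_one hx (ν - 1)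
  have hprev := sign_besselK_div_sub hx (ν - 1)
  rw [sub_add_cancel] at hrec
  rw [show ν - 1 - 1 / 2 = ν - 3 / 2 by ring] at hprev
  have key : SignType.sign (besselK (ν - 1) x / besselK ν x -
      x / (ν - 1 / 2 + √((ν - 3 / 2) ^ 2 + x ^ 2))) = SignType.sign (3 / 2 - ν) := by
    rw [sign_div_sub_eq_sign_sub_div hx (besselK_pos hx _) (besselK_pos hx _) hrec, ← neg_sub,
      Left.sign_neg, hprev, ← Left.sign_neg, neg_sub]
  refine ⟨fun hν => ?_, fun hν => ?_, fun hν => ?_⟩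
  · exact sub_neg.1 (sign_eq_neg_one_iff.1 (key.trans (sign_neg (by linarith))))
  · exact sub_eq_zero.1 (sign_eq_zero_iff.1 (key.trans (by simp [hν])))
  · exact sub_pos.1 (sign_eq_one_iff.1 (key.trans (sign_pos (by linarith))))
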